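/- Let V be a finite-dimensional real inner product space with orthonormal basis e₁,…,e_m (m ≥ 2), and let L_{ab} (1 ≤ a,b ≤ m−1) be real numbers with L_{ab} = L_{ba}. For each a define ω_a := Σ_{b=1}^{m−1} L_{ab}·(ext(e_m)∘int(e_b) + int(e_m)∘ext(e_b)) as an endomorphism of Λ(V). Then Σ_{a=1}^{m−1} cl(e_m)∘cl(e_a)∘ω_a = Σ_{a,b=1}^{m−1} L_{ab}·( ext(e_m)∘int(e_m)∘int(e_a)∘ext(e_b) + int(e_m)∘ext(e_m)∘ext(e_a)∘int(e_b) ). -/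

import Mathlib

/-
Write `A = ext(e_m)`, `B = int(e_m)`. Both square to zero, and since `e_a ⟂ e_m` every
`ext(e_a)`, `int(e_a)` anticommutes with `A` and `B`. Moving `cl(e_a)` past the leading factor
`A` or `B` of `ω_a` therefore turns `cl(e_m) cl(e_a) (A int(e_b) + B ext(e_b))` into
`BA cl(e_a) int(e_b) - AB cl(e_a) ext(e_b)`. Expanding `cl(e_a)` leaves the two claimed terms plus
`BA int(e_a) int(e_b) + AB ext(e_a) ext(e_b)`, which is antisymmetric in `(a, b)` and so dies
against the symmetric `L_{ab}`.
-/

open scoped RealInnerProductSpace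

/-- Left exterior multiplication by `v` on the exterior algebra `Λ(V)`. -/
noncomputable def extMul {V : Type*} [NormedAddCommGroup V] [InnerProductSpace ℝ V] (v : V) :
    ExteriorAlgebra ℝ V →ₗ[ℝ] ExteriorAlgebra ℝ V :=
  LinearMap.mulLeft ℝ (ExteriorAlgebra.ι ℝ v)

/-- Interior multiplication (contraction) with `v` on the exterior algebra `Λ(V)`:
the antiderivation pairing with `v` via the inner product. -/
noncomputable def intMul {V : Type*} [NormedAddCommGroup V] [InnerProductSpace ℝ V] (v : V) :
    ExteriorAlgebra ℝ V →ₗ[ℝ] ExteriorAlgebra ℝ V :=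
  CliffordAlgebra.contractLeft (innerₛₗ ℝ v)

/-- Clifford multiplication `cl(v) = ext(v) - int(v)`. -/
noncomputable def clMul {V : Type*} [NormedAddCommGroup V] [InnerProductSpace ℝ V] (v : V) :
    ExteriorAlgebra ℝ V →ₗ[ℝ] ExteriorAlgebra ℝ V :=
  extMul v - intMul v

theorem Finset.sum_sum_smul_eq_zero_of_symm_of_antisymm {ι R M : Type*} [Fintype ι] [Ring R]
    [Invertible (2 : R)] [AddCommGroup M] [Module R M] {c : ι → ι → R} {f : ι → ι → M}
    (hc : ∀ i j, c i j = c j i) (hf : ∀ i j, f i j + f j i = 0) :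
    ∑ i, ∑ j, c i j • f i j = 0 := by
  set S := ∑ i, ∑ j, c i j • f i j
  have hS : S = -S :=
    calc S = ∑ j, ∑ i, c i j • f i j := Finset.sum_comm
      _ = ∑ j, ∑ i, -(c j i • f j i) :=
        Finset.sum_congr rfl fun j _ => Finset.sum_congr rfl fun i _ => by
          rw [hc, eq_neg_of_add_eq_zero_left (hf i j), smul_neg]
      _ = -S := by simp only [S, Finset.sum_neg_distrib]
  rw [← invOf_two_smul_add_invOf_two_smul R S]
  nth_rewrite 2 [hS]
  rw [smul_neg, add_neg_cancel]

theorem sub_mul_mul_add_mul_of_anticomm {R : Type*} [Ring R] {A B C : R} (D E : R)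
    (hA : A * A = 0) (hB : B * B = 0) (hCA : C * A + A * C = 0) (hCB : C * B + B * C = 0) :
    (A - B) * C * (A * D + B * E) = B * A * C * D - A * B * C * E :=
  calc (A - B) * C * (A * D + B * E) = (A - B) * (C * A) * D + (A - B) * (C * B) * E := by
        noncomm_ring
    _ = -(A * A) * C * D + B * A * C * D - A * B * C * E + (B * B) * C * E := by
        rw [eq_neg_of_add_eq_zero_left hCA, eq_neg_of_add_eq_zero_left hCB]; noncomm_ring
    _ = B * A * C * D - A * B * C * E := by
        rw [hA, hB]; noncomm_ring

section ExteriorAlgebra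

variable {V : Type*} [NormedAddCommGroup V] [InnerProductSpace ℝ V]

theorem extMul_mul_add_extMul_mul (v w : V) :
    (extMul v * extMul w + extMul w * extMul v : Module.End ℝ (ExteriorAlgebra ℝ V)) = 0 := by
  refine LinearMap.ext fun x => ?_
  simp only [extMul, LinearMap.add_apply, Module.End.mul_apply, LinearMap.mulLeft_apply,
    ← mul_assoc, ← add_mul, ExteriorAlgebra.ι_add_mul_swap, zero_mul, LinearMap.zero_apply]

theorem extMul_mul_self (v : V) :
    (extMul v * extMul v : Module.End ℝ (ExteriorAlgebra ℝ V)) = 0 := by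
  refine LinearMap.ext fun x => ?_
  simp only [extMul, Module.End.mul_apply, LinearMap.mulLeft_apply, ← mul_assoc,
    ExteriorAlgebra.ι_sq_zero, zero_mul, LinearMap.zero_apply]

theorem intMul_mul_add_intMul_mul (v w : V) :
    (intMul v * intMul w + intMul w * intMul v : Module.End ℝ (ExteriorAlgebra ℝ V)) = 0 := by
  refine LinearMap.ext fun x => ?_
  simp only [intMul, LinearMap.add_apply, Module.End.mul_apply,
    CliffordAlgebra.contractLeft_comm (innerₛₗ ℝ v), neg_add_cancel, LinearMap.zero_apply]

theorem intMul_mul_self (v : V) :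
    (intMul v * intMul v : Module.End ℝ (ExteriorAlgebra ℝ V)) = 0 :=
  LinearMap.ext (CliffordAlgebra.contractLeft_contractLeft (innerₛₗ ℝ v))

theorem intMul_mul_add_extMul_mul (v w : V) :
    (intMul v * extMul w + extMul w * intMul v : Module.End ℝ (ExteriorAlgebra ℝ V))
      = ⟪v, w⟫ • 1 := by
  refine LinearMap.ext fun x => ?_
  simp only [intMul, extMul, LinearMap.add_apply, Module.End.mul_apply, LinearMap.mulLeft_apply,
    CliffordAlgebra.contractLeft_ι_mul, innerₛₗ_apply_apply, sub_add_cancel, LinearMap.smul_apply,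
    Module.End.one_apply]

theorem clMul_mul_add_extMul_mul_of_inner_eq_zero {u v : V} (h : ⟪u, v⟫ = 0) :
    (clMul u * extMul v + extMul v * clMul u : Module.End ℝ (ExteriorAlgebra ℝ V)) = 0 := by
  have hint := intMul_mul_add_extMul_mul u v
  rw [h, zero_smul] at hint
  calc clMul u * extMul v + extMul v * clMul u
      = (extMul u * extMul v + extMul v * extMul u)
          - (intMul u * extMul v + extMul v * intMul u) := by
        simp only [clMul, sub_mul, mul_sub]; abel
    _ = 0 := by rw [extMul_mul_add_extMul_mul, hint, sub_zero]

theorem clMul_mul_add_intMul_mul_of_inner_eq_zero {u v : V} (h : ⟪u, v⟫ = 0) :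
    (clMul u * intMul v + intMul v * clMul u : Module.End ℝ (ExteriorAlgebra ℝ V)) = 0 := by
  have hint := intMul_mul_add_extMul_mul v u
  rw [real_inner_comm, h, zero_smul] at hint
  calc clMul u * intMul v + intMul v * clMul u
      = (intMul v * extMul u + extMul u * intMul v)
          - (intMul u * intMul v + intMul v * intMul u) := by
        simp only [clMul, sub_mul, mul_sub]; abel
    _ = 0 := by rw [intMul_mul_add_intMul_mul, hint, sub_zero]

theorem clMul_mul_clMul_mul_of_inner_eq_zero {u v : V} (h : ⟪u, v⟫ = 0) (w : V) :
    (clMul v * clMul u * (extMul v * intMul w + intMul v * extMul w) :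
        Module.End ℝ (ExteriorAlgebra ℝ V))
      = (extMul v * intMul v * intMul u * extMul w + intMul v * extMul v * extMul u * intMul w)
        - (intMul v * extMul v * intMul u * intMul w
          + extMul v * intMul v * extMul u * extMul w) := by
  rw [clMul, sub_mul_mul_add_mul_of_anticomm _ _ (extMul_mul_self v) (intMul_mul_self v)
    (clMul_mul_add_extMul_mul_of_inner_eq_zero h) (clMul_mul_add_intMul_mul_of_inner_eq_zero h),
    clMul]
  simp only [mul_sub, sub_mul, mul_assoc]
  abel

end ExteriorAlgebra

theorem deRham_transmittal_endomorphism_general {V : Type*} [NormedAddCommGroup V]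
    [InnerProductSpace ℝ V] {n : ℕ} (e : OrthonormalBasis (Fin (n + 1)) ℝ V)
    (L : Fin n → Fin n → ℝ) (hL : ∀ a b, L a b = L b a)
    (ω : Fin n → (ExteriorAlgebra ℝ V →ₗ[ℝ] ExteriorAlgebra ℝ V))
    (hω : ∀ a, ω a = ∑ b : Fin n, L a b •
        (extMul (e (Fin.last n)) ∘ₗ intMul (e b.castSucc)
          + intMul (e (Fin.last n)) ∘ₗ extMul (e b.castSucc))) :
    ∑ a : Fin n, clMul (e (Fin.last n)) ∘ₗ clMul (e a.castSucc) ∘ₗ ω a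
      = ∑ a : Fin n, ∑ b : Fin n, L a b •
          (extMul (e (Fin.last n)) ∘ₗ intMul (e (Fin.last n)) ∘ₗ
              intMul (e a.castSucc) ∘ₗ extMul (e b.castSucc)
            + intMul (e (Fin.last n)) ∘ₗ extMul (e (Fin.last n)) ∘ₗ
              extMul (e a.castSucc) ∘ₗ intMul (e b.castSucc)) := by
  set v := e (Fin.last n)
  set X : Fin n → Module.End ℝ (ExteriorAlgebra ℝ V) := fun a => extMul (e a.castSucc)
  set Y : Fin n → Module.End ℝ (ExteriorAlgebra ℝ V) := fun a => intMul (e a.castSucc)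
  have horth (a : Fin n) : ⟪e a.castSucc, v⟫ = 0 := e.orthonormal.2 (Fin.castSucc_lt_last a).ne
  have hanti (a b : Fin n) :
      (intMul v * extMul v * Y a * Y b + extMul v * intMul v * X a * X b)
        + (intMul v * extMul v * Y b * Y a + extMul v * intMul v * X b * X a) = 0 :=
    calc _ = intMul v * extMul v * (Y a * Y b + Y b * Y a)
          + extMul v * intMul v * (X a * X b + X b * X a) := by
          simp only [mul_add, mul_assoc]; abel
      _ = 0 := by
          rw [intMul_mul_add_intMul_mul, extMul_mul_add_extMul_mul, mul_zero, mul_zero, add_zero]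
  simp only [hω, ← Module.End.mul_eq_comp, ← mul_assoc, Finset.mul_sum, mul_smul_comm,
    clMul_mul_clMul_mul_of_inner_eq_zero (horth _), smul_sub, Finset.sum_sub_distrib]
  rw [Finset.sum_sum_smul_eq_zero_of_symm_of_antisymm hL hanti, sub_zero]

/-- Lemma 6.1(4): for the de Rham transmittal problem, with
`ω_a = Σ_b L_{ab} (ext(e_m)∘int(e_b) + int(e_m)∘ext(e_b))`, one has
`Σ_a cl(e_m)∘cl(e_a)∘ω_a
  = Σ_{a,b} L_{ab} (ext(e_m)∘int(e_m)∘int(e_a)∘ext(e_b)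
                     + int(e_m)∘ext(e_m)∘ext(e_a)∘int(e_b))`.
Here `e : OrthonormalBasis (Fin (n+1)) ℝ V` with `n ≥ 1` (so `m = n + 1 ≥ 2`);
the indices `a`, `b` range over the first `n` basis vectors (`Fin.castSucc`) and
`e_m = e (Fin.last n)` is the last one. -/
theorem deRham_transmittal_endomorphism {V : Type*} [NormedAddCommGroup V]
    [InnerProductSpace ℝ V] {n : ℕ} (hn : 1 ≤ n) (e : OrthonormalBasis (Fin (n + 1)) ℝ V)
    (L : Fin n → Fin n → ℝ) (hL : ∀ a b, L a b = L b a)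
    (ω : Fin n → (ExteriorAlgebra ℝ V →ₗ[ℝ] ExteriorAlgebra ℝ V))
    (hω : ∀ a, ω a = ∑ b : Fin n, L a b •
        (extMul (e (Fin.last n)) ∘ₗ intMul (e b.castSucc)
          + intMul (e (Fin.last n)) ∘ₗ extMul (e b.castSucc))) :
    ∑ a : Fin n, clMul (e (Fin.last n)) ∘ₗ clMul (e a.castSucc) ∘ₗ ω a
      = ∑ a : Fin n, ∑ b : Fin n, L a b •
          (extMul (e (Fin.last n)) ∘ₗ intMul (e (Fin.last n)) ∘ₗ
              intMul (e a.castSucc) ∘ₗ extMul (e b.castSucc)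
            + intMul (e (Fin.last n)) ∘ₗ extMul (e (Fin.last n)) ∘ₗ
              extMul (e a.castSucc) ∘ₗ intMul (e b.castSucc)) :=
  deRham_transmittal_endomorphism_general e L hL ω hω
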